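/- For any Silver tree T and any two branches a, b ∈ [T] with a E₀ b, there exists σ ∈ 2^{<ω} such that b = σ ∔ a and σ ∔ T = T; i.e., E₀-equivalent branches of a Silver tree are connected by a shift that leaves the tree invariant. -/
import Mathlib


open List

/-- Initial segment of length `n` of an infinite binary sequence. -/
def seqTake (a : ℕ → Bool) (n : ℕ) : List Bool := List.ofFn (fun i : Fin n => a i)

/-- The shift `σ ∔ a` : flip bits of `a` at positions `i < |σ|` where `σ(i) = 1`
    (addition modulo 2), leave other positions unchanged. -/
def shiftSeq (σ : List Bool) (a : ℕ → Bool) : ℕ → Bool :=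
  fun i => if i < σ.length then xor (σ.getD i false) (a i) else a i

/-- The shift `σ ∔ v` of a finite string `v`. -/
def shiftStr (σ v : List Bool) : List Bool :=
  seqTake (shiftSeq σ (fun i => v.getD i false)) v.length

/-- The equivalence relation `E₀`: the sequences differ in finitely many positions. -/
def E0 (a b : ℕ → Bool) : Prop := {k | a k ≠ b k}.Finite

/-- The set `[T]` of infinite branches of a tree `T ⊆ 2^{<ω}`. -/
def branches (T : Set (List Bool)) : Set (ℕ → Bool) := {a | ∀ n, seqTake a n ∈ T}

/-- The portion `T↾u = {s ∈ T : u ⊆ s ∨ s ⊆ u}`. -/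
def portion (T : Set (List Bool)) (u : List Bool) : Set (List Bool) :=
  {s ∈ T | u <+: s ∨ s <+: u}

/-- A nonempty tree closed under initial segments. -/
def IsTree (T : Set (List Bool)) : Prop :=
  T.Nonempty ∧ ∀ s ∈ T, ∀ t : List Bool, t <+: s → t ∈ T

/-- A perfect tree: a tree in which every node extends to a splitting node. -/
def IsPerfectTree (T : Set (List Bool)) : Prop :=
  IsTree T ∧ ∀ s ∈ T, ∃ t ∈ T, s <+: t ∧ t ++ [false] ∈ T ∧ t ++ [true] ∈ T

/-- `u₀⌢i₀⌢u₁⌢i₁⌢…⌢uₙ⌢iₙ`. -/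
def silverPrefix (u : ℕ → List Bool) (i : ℕ → Bool) : ℕ → List Bool
  | 0 => u 0 ++ [i 0]
  | n+1 => silverPrefix u i n ++ u (n+1) ++ [i (n+1)]

/-- The branch `u₀⌢i₀⌢u₁⌢i₁⌢…` of the Silver tree with strings `uₖ` and bits `iₖ`. -/
def silverBranch (u : ℕ → List Bool) (i : ℕ → Bool) : ℕ → Bool :=
  fun m => (silverPrefix u i m).getD m false

/-- `T` is the Silver tree with defining strings `uₖ`: `T` consists exactly of all
    initial segments of the branches `u₀⌢i₀⌢u₁⌢i₁⌢…`. -/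
def SilverTreeWith (u : ℕ → List Bool) (T : Set (List Bool)) : Prop :=
  T = {s | ∃ i : ℕ → Bool, s = seqTake (silverBranch u i) s.length}

def IsSilver (T : Set (List Bool)) : Prop := ∃ u, SilverTreeWith u T

/-- The splitting levels `hₙ = |u₀|+1+…+|u_{n-1}|+1+|uₙ|` of a Silver tree. -/
def hLevel (u : ℕ → List Bool) (n : ℕ) : ℕ :=
  (∑ k ∈ Finset.range n, ((u k).length + 1)) + (u n).length

/-- `S` n-refines the Silver tree `T` (with strings `uT`): `S ⊆ T` and the first
    `n` defining strings agree. -/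
def RefinesN (uT : ℕ → List Bool) (S T : Set (List Bool)) (n : ℕ) : Prop :=
  S ⊆ T ∧ ∃ uS, SilverTreeWith uS S ∧ ∀ k < n, uS k = uT k

/-- `S` is clopen in `T`: a finite union of portions of `T`. -/
def ClopenIn (S T : Set (List Bool)) : Prop :=
  ∃ F : Finset (List Bool), ↑F ⊆ T ∧ S = ⋃ u ∈ F, portion T u

section Aux

lemma seqTake_length (a : ℕ → Bool) (n : ℕ) : (seqTake a n).length = n := by
  simp [seqTake]

lemma seqTake_getD (a : ℕ → Bool) {n m : ℕ} (h : m < n) :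
    (seqTake a n).getD m false = a m := by
  simp [seqTake, List.getD, List.getElem?_ofFn, h]

lemma seqTake_ext {a b : ℕ → Bool} {n : ℕ} (h : ∀ m < n, a m = b m) :
    seqTake a n = seqTake b n := by
  unfold seqTake; congr 1; funext m; exact h m m.2

lemma hLevel_succ (u : ℕ → List Bool) (n : ℕ) :
    hLevel u (n+1) = hLevel u n + 1 + (u (n+1)).length := by
  simp [hLevel, Finset.sum_range_succ]; omega

lemma le_hLevel (u : ℕ → List Bool) (n : ℕ) : n ≤ hLevel u n := by
  have h1 : n = ∑ k ∈ Finset.range n, 1 := by simp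
  have h2 : (∑ k ∈ Finset.range n, 1) ≤ ∑ k ∈ Finset.range n, ((u k).length + 1) :=
    Finset.sum_le_sum (fun _ _ => Nat.le_add_left 1 _)
  unfold hLevel; omega

lemma hLevel_mono (u : ℕ → List Bool) : Monotone (hLevel u) := by
  apply monotone_nat_of_le_succ
  intro n; rw [hLevel_succ]; omega

lemma silverPrefix_succ (u : ℕ → List Bool) (i : ℕ → Bool) (n : ℕ) :
    silverPrefix u i (n+1) = silverPrefix u i n ++ (u (n+1) ++ [i (n+1)]) := by
  simp [silverPrefix]

lemma silverPrefix_length (u : ℕ → List Bool) (i : ℕ → Bool) (n : ℕ) :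
    (silverPrefix u i n).length = hLevel u n + 1 := by
  induction n with
  | zero => simp [silverPrefix, hLevel]
  | succ n ih => rw [silverPrefix_succ]; simp [ih, hLevel_succ]; omega

lemma silverPrefix_getD_eq (u : ℕ → List Bool) (i j : ℕ → Bool) :
    ∀ n m, m ≤ hLevel u n → (∀ k, hLevel u k = m → i k = j k) →
    (silverPrefix u i n).getD m false = (silverPrefix u j n).getD m false := by
  intro n
  induction n with
  | zero =>
    intro m hm hk
    have h0 : hLevel u 0 = (u 0).length := by simp [hLevel]
    show (u 0 ++ [i 0]).getD m false = (u 0 ++ [j 0]).getD m false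
    rcases Nat.lt_or_ge m (u 0).length with h | h
    · rw [List.getD_append _ _ _ _ h, List.getD_append _ _ _ _ h]
    · have hm0 : m = (u 0).length := by omega
      have hij := hk 0 (by omega)
      rw [List.getD_append_right _ _ _ _ h, List.getD_append_right _ _ _ _ h]
      simp [hij]
  | succ n ih =>
    intro m hm hk
    rw [hLevel_succ] at hm
    have hli := silverPrefix_length u i n
    have hlj := silverPrefix_length u j n
    rw [silverPrefix_succ u i, silverPrefix_succ u j]
    rcases Nat.lt_or_ge m (hLevel u n + 1) with h1 | h1
    · rw [List.getD_append _ _ _ _ (by omega), List.getD_append _ _ _ _ (by omega)]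
      exact ih m (by omega) hk
    · rw [List.getD_append_right (silverPrefix u i n) _ _ _ (by omega),
          List.getD_append_right (silverPrefix u j n) _ _ _ (by omega), hli, hlj]
      rcases Nat.lt_or_ge m (hLevel u n + 1 + (u (n+1)).length) with h2 | h2
      · rw [List.getD_append (u (n+1)) _ _ _ (by omega),
            List.getD_append (u (n+1)) _ _ _ (by omega)]
      · have hm2 : m = hLevel u n + 1 + (u (n+1)).length := by omega
        have hk2 := hk (n+1) (by rw [hLevel_succ]; omega)
        rw [List.getD_append_right (u (n+1)) _ _ _ (by omega),
            List.getD_append_right (u (n+1)) _ _ _ (by omega)]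
        simp [hk2]

lemma silverPrefix_getD_hLevel (u : ℕ → List Bool) (i : ℕ → Bool) :
    ∀ n k, k ≤ n → (silverPrefix u i n).getD (hLevel u k) false = i k := by
  intro n
  induction n with
  | zero =>
    intro k hk
    interval_cases k
    have h0 : hLevel u 0 = (u 0).length := by simp [hLevel]
    show (u 0 ++ [i 0]).getD _ false = i 0
    rw [h0, List.getD_append_right _ _ _ _ (le_refl _)]
    simp
  | succ n ih =>
    intro k hk
    have hli := silverPrefix_length u i n
    rw [silverPrefix_succ u i]
    rcases Nat.lt_or_ge k (n+1) with h | h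
    · have hmono : hLevel u k ≤ hLevel u n := hLevel_mono u (by omega)
      rw [List.getD_append _ _ _ _ (by omega)]
      exact ih k (by omega)
    · have hk2 : k = n + 1 := by omega
      subst hk2
      rw [hLevel_succ, List.getD_append_right (silverPrefix u i n) _ _ _ (by omega), hli]
      rw [List.getD_append_right (u (n+1)) _ _ _ (by omega)]
      simp

lemma silverBranch_hLevel (u : ℕ → List Bool) (i : ℕ → Bool) (k : ℕ) :
    silverBranch u i (hLevel u k) = i k := by
  unfold silverBranch
  exact silverPrefix_getD_hLevel u i (hLevel u k) k (le_hLevel u k)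

lemma silverBranch_eq_of (u : ℕ → List Bool) {i j : ℕ → Bool} {m : ℕ}
    (h : ∀ k, hLevel u k = m → i k = j k) :
    silverBranch u i m = silverBranch u j m := by
  unfold silverBranch
  exact silverPrefix_getD_eq u i j m m (le_hLevel u m) h

lemma shiftSeq_eq (σ : List Bool) (a : ℕ → Bool) (m : ℕ) :
    shiftSeq σ a m = xor (σ.getD m false) (a m) := by
  unfold shiftSeq
  split
  · rfl
  · rename_i h
    rw [List.getD_eq_default _ _ (by omega)]
    simp

lemma shiftStr_seqTake (σ : List Bool) (c : ℕ → Bool) (n : ℕ) :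
    shiftStr σ (seqTake c n) = seqTake (shiftSeq σ c) n := by
  unfold shiftStr
  rw [seqTake_length]
  apply seqTake_ext
  intro m hm
  rw [shiftSeq_eq, shiftSeq_eq, seqTake_getD c hm]

lemma branch_eq (u : ℕ → List Bool) (T : Set (List Bool)) (hu : SilverTreeWith u T)
    {a : ℕ → Bool} (ha : a ∈ branches T) :
    a = silverBranch u (fun k => a (hLevel u k)) := by
  funext m
  have hmem := ha (hLevel u m + 1)
  rw [hu] at hmem
  obtain ⟨i, hi⟩ := hmem
  rw [seqTake_length] at hi
  have hpt : ∀ m' < hLevel u m + 1, a m' = silverBranch u i m' := by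
    intro m' hm'
    have h2 : (seqTake a (hLevel u m + 1)).getD m' false
        = (seqTake (silverBranch u i) (hLevel u m + 1)).getD m' false := by rw [← hi]
    rwa [seqTake_getD a hm', seqTake_getD (silverBranch u i) hm'] at h2
  have ham : a m = silverBranch u i m :=
    hpt m (Nat.lt_succ_of_le (le_hLevel u m))
  rw [ham]
  apply silverBranch_eq_of
  intro k hk
  have h1 := hpt (hLevel u k)
    (by rw [hk]; exact Nat.lt_succ_of_le (le_hLevel u m))
  rw [silverBranch_hLevel] at h1
  exact h1.symm

end Aux

theorem silver_e0_connected_by_invariant_shift (T : Set (List Bool)) (hT : IsSilver T)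
    (a b : ℕ → Bool) (ha : a ∈ branches T) (hb : b ∈ branches T) (hab : E0 a b) :
    ∃ σ : List Bool, b = shiftSeq σ a ∧ (shiftStr σ) '' T = T := by
  obtain ⟨u, hu⟩ := hT
  have haA : a = silverBranch u (fun k => a (hLevel u k)) := branch_eq u T hu ha
  have hbB : b = silverBranch u (fun k => b (hLevel u k)) := branch_eq u T hu hb
  obtain ⟨N, hN⟩ : ∃ N, ∀ m, N ≤ m → a m = b m := by
    obtain ⟨M, hM⟩ := hab.bddAbove
    refine ⟨M + 1, fun m hm => ?_⟩
    by_contra h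
    have := hM (Set.mem_setOf.mpr h)
    omega
  set σ := List.ofFn (fun k : Fin N => xor (a k) (b k)) with hσdef
  have hσlen : σ.length = N := by simp [hσdef]
  have hσget : ∀ m < N, σ.getD m false = xor (a m) (b m) := by
    intro m hm
    simp [hσdef, List.getD, List.getElem?_ofFn, hm]
  have hσget' : ∀ m, N ≤ m → σ.getD m false = false := by
    intro m hm
    exact List.getD_eq_default _ _ (by omega)
  have hσ0 : ∀ m, (∀ k, hLevel u k ≠ m) → σ.getD m false = false := by
    intro m hm
    rcases Nat.lt_or_ge m N with h | h
    · rw [hσget m h]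
      have hab' : a m = b m := by
        rw [haA, hbB]
        exact silverBranch_eq_of u (fun k hk => absurd hk (hm k))
      rw [hab']
      simp
    · exact hσget' m h
  refine ⟨σ, ?_, ?_⟩
  · funext m
    rw [shiftSeq_eq]
    rcases Nat.lt_or_ge m N with h | h
    · rw [hσget m h]
      cases a m <;> cases b m <;> rfl
    · rw [hσget' m h, hN m h]
      simp
  · set jmap : (ℕ → Bool) → (ℕ → Bool) :=
      fun i k => xor (σ.getD (hLevel u k) false) (i k) with hjdef
    have hshift : ∀ i, shiftSeq σ (silverBranch u i) = silverBranch u (jmap i) := by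
      intro i
      funext m
      rw [shiftSeq_eq]
      by_cases h : ∃ k, hLevel u k = m
      · obtain ⟨k, hk⟩ := h
        subst hk
        rw [silverBranch_hLevel, silverBranch_hLevel]
      · push_neg at h
        rw [hσ0 m h]
        simp only [Bool.false_xor]
        exact silverBranch_eq_of u (fun k hk => absurd hk (h k))
    have hjj : ∀ i, jmap (jmap i) = i := by
      intro i
      funext k
      simp [hjdef]
    have hmemT : ∀ i n, seqTake (silverBranch u i) n ∈ T := by
      intro i n
      rw [hu]
      exact ⟨i, by rw [seqTake_length]⟩
    ext s
    constructor
    · rintro ⟨t, ht, rfl⟩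
      rw [hu] at ht
      obtain ⟨i, hi⟩ := ht
      rw [hi, shiftStr_seqTake, hshift]
      exact hmemT _ _
    · intro hs
      have hs' := hs
      rw [hu] at hs'
      obtain ⟨i, hi⟩ := hs'
      refine ⟨seqTake (silverBranch u (jmap i)) s.length, hmemT _ _, ?_⟩
      rw [shiftStr_seqTake, hshift, hjj, ← hi]
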